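/- For every k ≥ 1, the prefix of the Thue–Morse word of length 2^k equals the factor of the Thue–Morse word of length 2^k starting at position 2^k + 2^{k-1}; i.e., m[0..2^k−1] = m[2^k+2^{k-1}..2^{k+1}+2^{k-1}−1]. -/
import Mathlib


/-- The Thue–Morse word: `tm i` is the parity of the binary digit sum of `i`. -/
def tm (i : ℕ) : ℕ := (Nat.digits 2 i).sum % 2

lemma digits_len_le_of_lt_pow {n j : ℕ} (hn : n < 2 ^ j) :
    (Nat.digits 2 n).length ≤ j := by
  rcases Nat.eq_zero_or_pos n with rfl | hpos
  · simp
  have h1 : 2 ^ (Nat.digits 2 n).length ≤ 2 * n :=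
    Nat.base_pow_length_digits_le 2 n one_lt_two hpos.ne'
  have h2 : 2 * n < 2 ^ (j + 1) := by
    rw [pow_succ, mul_comm]; omega
  have := lt_of_le_of_lt h1 h2
  exact Nat.lt_succ_iff.mp (Nat.pow_lt_pow_iff_right one_lt_two |>.mp this)

lemma sum_digits_add_pow_mul {n m j : ℕ} (hn : n < 2 ^ j) (hm : 0 < m) :
    (Nat.digits 2 (n + 2 ^ j * m)).sum = (Nat.digits 2 n).sum + (Nat.digits 2 m).sum := by
  obtain ⟨k, hk⟩ := Nat.le.dest (digits_len_le_of_lt_pow hn)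
  have := Nat.digits_append_zeroes_append_digits (b := 2) (k := k) (m := m) (n := n)
    one_lt_two hm
  rw [hk] at this
  rw [← this]
  simp

/-- for every k ≥ 1,
m[0..2^k−1] = m[2^k+2^{k-1}..2^{k+1}+2^{k-1}−1]. -/
theorem thueMorse_prefix_recurs (k : ℕ) (hk : 1 ≤ k) :
    ∀ i < 2 ^ k, tm i = tm (2 ^ k + 2 ^ (k - 1) + i) := by
  obtain ⟨j, rfl⟩ : ∃ j, k = j + 1 := ⟨k - 1, (Nat.succ_pred_eq_of_pos hk).symm⟩
  intro i hi
  simp only [Nat.add_sub_cancel] at *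
  unfold tm
  rcases lt_or_ge i (2 ^ j) with h | h
  · -- i < 2^j : i + 3·2^j, digit sum s(i)+2
    have : 2 ^ (j + 1) + 2 ^ j + i = i + 2 ^ j * 3 := by rw [pow_succ]; ring
    rw [this, sum_digits_add_pow_mul h (by norm_num)]
    norm_num [Nat.add_mul_mod_self_right]
  · -- i = 2^j + b
    obtain ⟨b, rfl⟩ := Nat.le.dest h
    have hb : b < 2 ^ j := by
      rw [pow_succ] at hi; omega
    have h1 : 2 ^ (j + 1) + 2 ^ j + (2 ^ j + b) = b + 2 ^ (j + 2) * 1 := by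
      rw [pow_succ, pow_succ]; ring
    have h2 : 2 ^ j + b = b + 2 ^ j * 1 := by ring
    have hb2 : b < 2 ^ (j + 2) := lt_of_lt_of_le hb (Nat.pow_le_pow_right two_pos (by omega))
    rw [h1, h2, sum_digits_add_pow_mul hb one_pos, sum_digits_add_pow_mul hb2 one_pos]
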